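/- arXiv:0905.1937 — 3 statements merged into one kernel-verified Lean document; each statement's English description precedes it below -/
import Mathlib

section
/- Let N ≥ 5, let V(r) = 1/(r² − (9/10) r^{N/2+1}) and W₁(r) = (N−4)² / (4 (r² − r^{N/2})(r² − (9/10) r^{N/2+1})) for r ∈ (0,1), and define ψ(r) = r^{−N/2+2} − 1. Then ψ is positive on (0,1) and is a super-solution of the ODE y''(r) + ((N−1)/r + V'(r)/V(r)) y'(r) + (W₁(r)/V(r)) y(r) = 0 on (0,1); that is, ψ''(r) + ((N−1)/r + V'(r)/V(r)) ψ'(r) + (W₁(r)/V(r)) ψ(r) ≤ 0 for all r ∈ (0,1). -/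
/-!
Write `a = 2 - N/2 < 0`, so `ψ = r^a - 1` and `(N - 4)^2 / 4 = a^2`, and take the weight
`V = 1/g` with `g = r^2 - c r^(N/2+1)`. Then `W₁/V · ψ = a^2 r^(a-2)` exactly, the Euler part
`ψ'' + (N-1)/r ψ' + a^2 r^(a-2)` equals `2a r^(a-2)`, and adding `-(g'/g) ψ'` leaves the closed
form `c (2 - N/2) (N/2 - 1) / (r - c r^(N/2))`. For `N > 4` and `0 ≤ c ≤ 1` its numerator is
`≤ 0` and its denominator is positive on `(0, 1)`.
-/

open Real Set

theorem deriv_one_div_div_one_div {𝕜 : Type*} [NontriviallyNormedField 𝕜] {f : 𝕜 → 𝕜} {x : 𝕜}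
    (hf : DifferentiableAt 𝕜 f x) (hx : f x ≠ 0) :
    deriv (fun y => 1 / f y) x / (1 / f x) = -deriv f x / f x := by
  simp only [one_div, deriv_fun_inv'' hf hx]
  field_simp

theorem deriv_rpow_sub_const (a c : ℝ) :
    deriv (fun x : ℝ => x ^ a - c) = fun x => a * x ^ (a - 1) := by
  rw [deriv_sub_const_fun, deriv_rpow_const']

theorem deriv_deriv_rpow_sub_const (a c x : ℝ) :
    deriv (deriv fun x : ℝ => x ^ a - c) x = a * ((a - 1) * x ^ (a - 2)) := by
  rw [deriv_rpow_sub_const, deriv_const_mul_field', deriv_rpow_const', sub_sub,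
    one_add_one_eq_two]

theorem hasDerivAt_sq_sub_const_mul_rpow (c p : ℝ) {x : ℝ} (hx : x ≠ 0) :
    HasDerivAt (fun x : ℝ => x ^ 2 - c * x ^ p) (2 * x - c * (p * x ^ (p - 1))) x := by
  have hsq : HasDerivAt (fun x : ℝ => x ^ 2) (2 * x) x := by
    simpa using hasDerivAt_pow 2 x
  exact hsq.sub ((hasDerivAt_rpow_const (Or.inl hx)).const_mul c)

namespace RadialODE

noncomputable def operator (N : ℝ) (V W y : ℝ → ℝ) (r : ℝ) : ℝ :=
  deriv (deriv y) r + ((N - 1) / r + deriv V r / V r) * deriv y r + (W r / V r) * y r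

noncomputable def weight (N c r : ℝ) : ℝ := 1 / (r ^ 2 - c * r ^ (N / 2 + 1))

noncomputable def potential (N c r : ℝ) : ℝ :=
  (N - 4) ^ 2 / (4 * (r ^ 2 - r ^ (N / 2)) * (r ^ 2 - c * r ^ (N / 2 + 1)))

noncomputable def psi (N r : ℝ) : ℝ := r ^ (-N / 2 + 2) - 1

variable {N c r : ℝ}

theorem operator_psi_eq (hr : 0 < r) (hsq : r ^ (N / 2) ≠ r ^ 2) (hc : c * r ^ (N / 2) ≠ r) :
    operator N (weight N c) (potential N c) (psi N) r =
      c * (2 - N / 2) * (N / 2 - 1) / (r - c * r ^ (N / 2)) := by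
  have hpow : r ^ (N / 2 + 1) = r ^ (N / 2) * r := rpow_add_one hr.ne' _
  have hg : r ^ 2 - c * r ^ (N / 2 + 1) ≠ 0 := by
    rw [hpow, show r ^ 2 - c * (r ^ (N / 2) * r) = r * (r - c * r ^ (N / 2)) by ring]
    exact mul_ne_zero hr.ne' (sub_ne_zero.2 hc.symm)
  have hψ1 : r ^ (-N / 2 + 2 - 1) = r / r ^ (N / 2) := by
    rw [show -N / 2 + 2 - 1 = 1 - N / 2 by ring, rpow_sub hr, rpow_one]
  have hψ2 : r ^ (-N / 2 + 2 - 2) = 1 / r ^ (N / 2) := by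
    rw [show -N / 2 + 2 - 2 = 0 - N / 2 by ring, rpow_sub hr, rpow_zero]
  have hψ : r ^ (-N / 2 + 2) = r ^ 2 / r ^ (N / 2) := by
    rw [show -N / 2 + 2 = 2 - N / 2 by ring, rpow_sub hr, rpow_two]
  have hpow' : r ^ (N / 2 + 1 - 1) = r ^ (N / 2) := by rw [add_sub_cancel_right]
  have hg' := hasDerivAt_sq_sub_const_mul_rpow c (N / 2 + 1) hr.ne'
  unfold operator weight potential psi
  rw [deriv_deriv_rpow_sub_const, deriv_rpow_sub_const,
    deriv_one_div_div_one_div hg'.differentiableAt hg, hg'.deriv]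
  simp only [hψ1, hψ2, hψ, hpow', hpow]
  rw [hpow] at hg
  have hx0 : r ^ (N / 2) ≠ 0 := (rpow_pos_of_pos hr _).ne'
  generalize r ^ (N / 2) = x at *
  have hsq' : r ^ 2 - x ≠ 0 := sub_ne_zero.2 hsq.symm
  have hc' : r - x * c ≠ 0 := by rwa [mul_comm, sub_ne_zero, ne_comm]
  field_simp
  ring

theorem rpow_half_lt_sq (hN : 4 < N) (hr : r ∈ Ioo 0 1) : r ^ (N / 2) < r ^ 2 := by
  rw [← rpow_two]
  exact rpow_lt_rpow_of_exponent_gt hr.1 hr.2 (by linarith)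

theorem psi_pos (hN : 4 < N) (hr : r ∈ Ioo 0 1) : 0 < psi N r :=
  sub_pos.2 (one_lt_rpow_of_pos_of_lt_one_of_neg hr.1 hr.2 (by linarith))

theorem operator_psi_nonpos (hN : 4 < N) (hc₀ : 0 ≤ c) (hc₁ : c ≤ 1) (hr : r ∈ Ioo 0 1) :
    operator N (weight N c) (potential N c) (psi N) r ≤ 0 := by
  have hsq := rpow_half_lt_sq hN hr
  have hx0 : 0 < r ^ (N / 2) := rpow_pos_of_pos hr.1 _
  have hcx : c * r ^ (N / 2) < r := by nlinarith [hr.1, hr.2]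
  rw [operator_psi_eq hr.1 hsq.ne hcx.ne]
  refine div_nonpos_of_nonpos_of_nonneg ?_ (sub_pos.2 hcx).le
  exact mul_nonpos_of_nonpos_of_nonneg (mul_nonpos_of_nonneg_of_nonpos hc₀ (by linarith))
    (by linarith)

end RadialODE

open RadialODE in
theorem psi_supersolution (N : ℕ) (hN : 5 ≤ N)
    (V W₁ ψ : ℝ → ℝ)
    (hV : ∀ r : ℝ, V r = 1 / (r ^ 2 - 9 / 10 * r ^ ((N : ℝ) / 2 + 1)))
    (hW : ∀ r : ℝ, W₁ r = ((N : ℝ) - 4) ^ 2 /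
      (4 * (r ^ 2 - r ^ ((N : ℝ) / 2)) * (r ^ 2 - 9 / 10 * r ^ ((N : ℝ) / 2 + 1))))
    (hψ : ∀ r : ℝ, ψ r = r ^ (-(N : ℝ) / 2 + 2) - 1) :
    ∀ r ∈ Set.Ioo (0 : ℝ) 1,
      0 < ψ r ∧
      deriv (deriv ψ) r + (((N : ℝ) - 1) / r + deriv V r / V r) * deriv ψ r +
        (W₁ r / V r) * ψ r ≤ 0 := by
  obtain rfl : V = weight N (9 / 10) := funext hV
  obtain rfl : W₁ = potential N (9 / 10) := funext hW
  obtain rfl : ψ = psi N := funext hψ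
  have hN' : (4 : ℝ) < N := by exact_mod_cast hN
  intro r hr
  exact ⟨psi_pos hN' hr, operator_psi_nonpos hN' (by norm_num) (by norm_num) hr⟩
end

section
/- Let N = 13 and define w_{3.5}(x) = −4 ln|x| − 8/7 + (8/7)|x|^{7/2} on ℝ^N \ {0}. Then for every x with 0 < |x| < 1, Δ²w_{3.5}(x) ≤ 2525 e^{w_{3.5}(x)}. -/
/-!
Write `w = w_{7/2}` as `c log r + a r^p + d` in `r = ‖x‖`. For `x ≠ 0`, the chain rule through
`s = ‖x‖²` gives `Δ (G ∘ ‖·‖²) = 4 s G'' + 2 N G'`, hence `Δ log r = (N - 2) r⁻²` and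
`Δ r^p = p (p + N - 2) r^(p-2)`. Applying this twice, `Δ²w = 792 r⁻⁴ + (2175/2) r^(-1/2)` when
`N = 13`. With `t = r^(7/2)` one has `e^w = r⁻⁴ e^(-8/7 + 8t/7)`, so after multiplying by `r⁴` the
claim becomes `792 + (2175/2) t ≤ 2525 e^(-8/7) e^(8t/7)` for `t ≥ 0`. This follows from the cubic
Taylor bound for `e^(8t/7)` and the numerical bound `e^(-8/7) ≥ 0.318904`.
-/

open Real MeasureTheory Metric

noncomputable def lap {N : ℕ} (u : EuclideanSpace ℝ (Fin N) → ℝ)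
    (x : EuclideanSpace ℝ (Fin N)) : ℝ :=
  ∑ i : Fin N, iteratedFDeriv ℝ 2 u x ![EuclideanSpace.single i 1, EuclideanSpace.single i 1]

section Radial

variable {N : ℕ}

local notation "E" => EuclideanSpace ℝ (Fin N)

theorem Filter.EventuallyEq.lap_eq {f g : E → ℝ} {x : E} (h : f =ᶠ[nhds x] g) :
    lap f x = lap g x := by
  have h2 : fderiv ℝ (fderiv ℝ f) x = fderiv ℝ (fderiv ℝ g) x := h.fderiv.fderiv_eq
  simp only [lap, iteratedFDeriv_two_apply, h2]

theorem hasFDerivAt_comp_norm_sq {G : ℝ → ℝ} {g : ℝ} {y : E}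
    (hG : HasDerivAt G g (‖y‖ ^ 2)) :
    HasFDerivAt (fun z : E => G (‖z‖ ^ 2)) (g • (2 • innerSL ℝ y)) y :=
  hG.comp_hasFDerivAt y (hasStrictFDerivAt_norm_sq y).hasFDerivAt

theorem lap_comp_norm_sq {G G' G'' : ℝ → ℝ}
    (hG : ∀ s, 0 < s → HasDerivAt G (G' s) s) (hG' : ∀ s, 0 < s → HasDerivAt G' (G'' s) s)
    {x : E} (hx : x ≠ 0) :
    lap (fun z : E => G (‖z‖ ^ 2)) x = 4 * ‖x‖ ^ 2 * G'' (‖x‖ ^ 2) + 2 * N * G' (‖x‖ ^ 2) := by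
  set s := ‖x‖ ^ 2
  have hs : 0 < s := by positivity
  have hfderiv : fderiv ℝ (fun z : E => G (‖z‖ ^ 2)) =ᶠ[nhds x]
      fun y => G' (‖y‖ ^ 2) • (2 • innerSL ℝ y) := by
    filter_upwards [isOpen_compl_singleton.mem_nhds hx] with y hy
    exact (hasFDerivAt_comp_norm_sq (hG _ (by positivity [norm_pos_iff.mpr hy]))).fderiv
  have hfderiv2 : HasFDerivAt (fun y => G' (‖y‖ ^ 2) • (2 • innerSL ℝ y))
      (G' s • (2 • innerSL ℝ) + (G'' s • (2 • innerSL ℝ x)).smulRight (2 • innerSL ℝ x)) x :=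
    (hasFDerivAt_comp_norm_sq (hG' s hs)).smul (2 • innerSL ℝ : E →L[ℝ] E →L[ℝ] ℝ).hasFDerivAt
  have hsum : ∑ i : Fin N, x i ^ 2 = s := by
    simp [s, EuclideanSpace.norm_sq_eq]
  have hentry (i : Fin N) :
      (G' s • (2 • innerSL ℝ) + (G'' s • (2 • innerSL ℝ x)).smulRight (2 • innerSL ℝ x) :
        E →L[ℝ] E →L[ℝ] ℝ) (EuclideanSpace.single i 1) (EuclideanSpace.single i 1) =
        2 * G' s + 4 * G'' s * x i ^ 2 := by
    have hinner : ∀ a b : E, innerSL ℝ a b = inner ℝ a b := fun _ _ => rfl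
    simp only [add_apply, smul_apply, ContinuousLinearMap.smulRight_apply, hinner,
      EuclideanSpace.inner_single_right, ringHom_apply, nsmul_eq_mul, smul_eq_mul,
      inner_self_eq_norm_sq_to_K, PiLp.norm_single, norm_one, one_pow, one_mul, mul_one,
      Nat.cast_ofNat]
    ring
  simp only [lap, iteratedFDeriv_two_apply, hfderiv.fderiv_eq, hfderiv2.fderiv,
    Matrix.cons_val_zero, Matrix.cons_val_one]
  rw [Finset.sum_congr rfl fun i _ => hentry i, Finset.sum_add_distrib]
  simp only [Finset.sum_const, Finset.card_univ, Fintype.card_fin, nsmul_eq_mul, ← Finset.mul_sum,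
    hsum]
  ring

theorem sq_rpow_div_two {r : ℝ} (hr : 0 ≤ r) (p : ℝ) : (r ^ 2) ^ (p / 2) = r ^ p := by
  rw [Real.rpow_div_two_eq_sqrt p (by positivity), Real.sqrt_sq hr]

theorem lap_log_add_rpow_add_rpow (c a p b q d : ℝ) {x : E} (hx : x ≠ 0) :
    lap (fun y : E => c * log ‖y‖ + a * ‖y‖ ^ p + b * ‖y‖ ^ q + d) x =
      c * (N - 2) / ‖x‖ ^ 2 + a * p * (p + N - 2) * ‖x‖ ^ (p - 2) +
        b * q * (q + N - 2) * ‖x‖ ^ (q - 2) := by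
  set F : ℝ → ℝ := fun s => c / 2 * log s + a * s ^ (p / 2) + b * s ^ (q / 2) + d
  set F' : ℝ → ℝ := fun s =>
    c / 2 * s ^ (-1 : ℝ) + a * (p / 2) * s ^ (p / 2 - 1) + b * (q / 2) * s ^ (q / 2 - 1)
  set F'' : ℝ → ℝ := fun s => c / 2 * (-1 * s ^ (-1 - 1 : ℝ)) +
    a * (p / 2) * ((p / 2 - 1) * s ^ (p / 2 - 1 - 1)) +
      b * (q / 2) * ((q / 2 - 1) * s ^ (q / 2 - 1 - 1))
  have hpow (k e : ℝ) {s : ℝ} (hs : 0 < s) :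
      HasDerivAt (fun s => k * s ^ e) (k * (e * s ^ (e - 1))) s :=
    (Real.hasDerivAt_rpow_const (Or.inl hs.ne')).const_mul k
  have hF (s : ℝ) (hs : 0 < s) : HasDerivAt F (F' s) s := by
    have hlog : HasDerivAt (fun s => c / 2 * log s) (c / 2 * s ^ (-1 : ℝ)) s := by
      rw [Real.rpow_neg_one]
      exact (Real.hasDerivAt_log hs.ne').const_mul _
    exact (((hlog.fun_add (hpow a (p / 2) hs)).fun_add (hpow b (q / 2) hs)).add_const d).congr_deriv
      (by ring)
  have hF' (s : ℝ) (hs : 0 < s) : HasDerivAt F' (F'' s) s :=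
    ((hpow (c / 2) (-1) hs).fun_add (hpow (a * (p / 2)) (p / 2 - 1) hs)).fun_add
      (hpow (b * (q / 2)) (q / 2 - 1) hs)
  have hradial : (fun y : E => c * log ‖y‖ + a * ‖y‖ ^ p + b * ‖y‖ ^ q + d) =
      fun y => F (‖y‖ ^ 2) := by
    funext y
    simp only [F, Real.log_pow, sq_rpow_div_two (norm_nonneg y)]
    push_cast
    ring
  have hr : 0 < ‖x‖ := norm_pos_iff.mpr hx
  have hs : (0 : ℝ) < ‖x‖ ^ 2 := by positivity
  rw [hradial, lap_comp_norm_sq hF hF' hx]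
  simp only [F', F'', Real.rpow_sub_one hs.ne', sq_rpow_div_two hr.le, Real.rpow_neg_one,
    Real.rpow_sub hr, Real.rpow_two]
  field_simp
  ring

theorem lap_lap_log_add_rpow {m : ℝ} (hm : m ≠ 0) {x : E} (hx : x ≠ 0) :
    lap (lap fun y : E => -4 * log ‖y‖ - 4 / m + 4 / m * ‖y‖ ^ m) x =
      8 * (N - 2) * (N - 4) / ‖x‖ ^ 4 +
        4 * (m + N - 2) * (m - 2) * (m + N - 4) * ‖x‖ ^ (m - 4) := by
  have hw : (fun y : E => -4 * log ‖y‖ - 4 / m + 4 / m * ‖y‖ ^ m) =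
      fun y => -4 * log ‖y‖ + 4 / m * ‖y‖ ^ m + 0 * ‖y‖ ^ m + -(4 / m) := by
    funext y
    ring
  have hlap : lap (fun y : E => -4 * log ‖y‖ - 4 / m + 4 / m * ‖y‖ ^ m) =ᶠ[nhds x]
      fun y => 0 * log ‖y‖ + -4 * (N - 2) * ‖y‖ ^ (-2 : ℝ) + 4 * (m + N - 2) * ‖y‖ ^ (m - 2) + 0 := by
    filter_upwards [isOpen_compl_singleton.mem_nhds hx] with y hy
    rw [hw, lap_log_add_rpow_add_rpow _ _ _ _ _ _ hy, Real.rpow_neg (norm_nonneg y), Real.rpow_two]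
    field_simp
    ring
  rw [hlap.lap_eq, lap_log_add_rpow_add_rpow _ _ _ _ _ _ hx, show m - 2 - 2 = m - 4 by ring,
    show (-2 : ℝ) - 2 = -4 by norm_num, Real.rpow_neg (norm_nonneg x)]
  norm_num
  ring

end Radial

theorem exp_four_sevenths_le : exp (4 / 7) ≤ 1.7708 := by
  have h := Real.exp_bound' (x := 4 / 7) (by norm_num) (by norm_num) (n := 6) (by norm_num)
  norm_num [Finset.sum_range_succ, Nat.factorial] at h
  linarith

theorem le_exp_neg_eight_sevenths : 0.318904 ≤ exp (-(8 / 7)) := by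
  have hsq : exp (-(8 / 7)) * exp (4 / 7) ^ 2 = 1 := by
    rw [sq, ← Real.exp_add, ← Real.exp_add]
    norm_num
  nlinarith [exp_four_sevenths_le, Real.exp_pos (4 / 7), Real.exp_pos (-(8 / 7))]

theorem cubic_le_exp {u : ℝ} (hu : 0 ≤ u) : 1 + u + u ^ 2 / 2 + u ^ 3 / 6 ≤ exp u := by
  have h := Real.sum_le_exp_of_nonneg hu 4
  norm_num [Finset.sum_range_succ, Nat.factorial] at h
  linarith

theorem affine_le_exp {t : ℝ} (ht : 0 ≤ t) :
    792 + 2175 / 2 * t ≤ 2525 * exp (-(8 / 7) + 8 / 7 * t) := by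
  calc 792 + 2175 / 2 * t
        ≤ 2525 * (0.318904 * (1 + 8 / 7 * t + (8 / 7 * t) ^ 2 / 2 + (8 / 7 * t) ^ 3 / 6)) := by
        -- the difference of the two sides has its minimum, about 0.6, near t = 11/75
        nlinarith [sq_nonneg (t - 11 / 75), mul_nonneg ht (sq_nonneg (t - 11 / 75))]
    _ ≤ 2525 * (exp (-(8 / 7)) * exp (8 / 7 * t)) := by
        gcongr
        · exact le_exp_neg_eight_sevenths
        · exact cubic_le_exp (by positivity)
    _ = 2525 * exp (-(8 / 7) + 8 / 7 * t) := by rw [Real.exp_add]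

theorem w_three_half_subsolution_dim13_general
    (w : EuclideanSpace ℝ (Fin 13) → ℝ)
    (hw : ∀ x : EuclideanSpace ℝ (Fin 13),
      w x = -4 * Real.log ‖x‖ - 8 / 7 + (8 / 7) * ‖x‖ ^ ((7 : ℝ) / 2))
    (x : EuclideanSpace ℝ (Fin 13)) (hx : x ≠ 0) :
    lap (lap w) x ≤ 2525 * Real.exp (w x) := by
  have hw' : w = fun y => -4 * log ‖y‖ - 4 / (7 / 2) + 4 / (7 / 2) * ‖y‖ ^ ((7 : ℝ) / 2) := by
    funext y
    rw [hw]
    norm_num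
  have hr : 0 < ‖x‖ := norm_pos_iff.mpr hx
  set t := ‖x‖ ^ ((7 : ℝ) / 2) with ht
  have hexp : exp (w x) = exp (-(8 / 7) + 8 / 7 * t) / ‖x‖ ^ 4 := by
    rw [hw, ← ht, ← Real.exp_log (pow_pos hr 4), ← Real.exp_sub, Real.log_pow]
    push_cast
    ring_nf
  calc lap (lap w) x = (792 + 2175 / 2 * t) / ‖x‖ ^ 4 := by
        rw [hw', lap_lap_log_add_rpow (by norm_num) hx, Real.rpow_sub hr]
        norm_num
        ring
    _ ≤ 2525 * exp (-(8 / 7) + 8 / 7 * t) / ‖x‖ ^ 4 := by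
        gcongr
        exact affine_le_exp (by positivity)
    _ = 2525 * exp (w x) := by rw [hexp, mul_div_assoc]

theorem w_three_half_subsolution_dim13
    (w : EuclideanSpace ℝ (Fin 13) → ℝ)
    (hw : ∀ x : EuclideanSpace ℝ (Fin 13),
      w x = -4 * Real.log ‖x‖ - 8 / 7 + (8 / 7) * ‖x‖ ^ ((7 : ℝ) / 2))
    (x : EuclideanSpace ℝ (Fin 13)) (hx : x ≠ 0) (hx1 : ‖x‖ < 1) :
    lap (lap w) x ≤ 2525 * Real.exp (w x) :=
  w_three_half_subsolution_dim13_general w hw x hx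
end

section
/- Let N = 13 and define w_{3.5}(r) = −4 ln r − 8/7 + (8/7) r^{7/2} for r ∈ (0,1). Then for every r ∈ (0,1), ((N−2)²(N−4)²/16) · 1/((r² − (9/10) r^{N/2+1})(r² − r^{N/2})) + ((N−1)(N−4)²/4) · 1/(r²(r² − r^{N/2})) ≥ 2560 e^{w_{3.5}(r)}. -/
/-!
Write `r = x²` with `0 < x < 1`. Then `e^{w(r)} = e^{-8/7} e^{8/7 x⁷} / x⁸`, and after clearing the
common factor `x⁸` the claim reads `2560 e^{-8/7} e^{u} A B ≤ 9801/16 + 243 A`, where `u = 8/7 x⁷`,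
`A = 1 - 9/10 x¹¹` and `B = 1 - x⁹`. Bounding `e^{-8/7} ≤ 0.31891` and `e^{-u}` from below by its cubic
Taylor polynomial turns this into a polynomial inequality of degree 32 on `[0, 1]`. That inequality
is very tight (relative margin about `1.5 · 10⁻⁴` near `x ≈ 0.755`), and is proved by an exact
certificate: up to a positive factor, the difference equals `(49 x - 37)² Q(x) + (a + b x)` with
`a, b > 0` and `Q` having positive coefficients in the Bernstein basis of degree 30.
-/

open Real

lemma sq_rpow_natCast_div_two {x : ℝ} (hx : 0 ≤ x) (n : ℕ) : (x ^ 2) ^ ((n : ℝ) / 2) = x ^ n := by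
  rw [← rpow_natCast x 2, ← rpow_mul hx, ← rpow_natCast x n]
  congr 1
  push_cast
  ring

lemma one_sub_add_sq_sub_cube_le_exp_neg {w : ℝ} (hw : 0 ≤ w) :
    1 - w + w ^ 2 / 2 - w ^ 3 / 6 ≤ exp (-w) := by
  let h (t : ℝ) : ℝ := exp t * (1 - t + t ^ 2 / 2 - t ^ 3 / 6)
  have hderiv (t : ℝ) : deriv h t = -(exp t * t ^ 3 / 6) := by
    simp (disch := fun_prop) only [h, deriv_fun_mul, Real.deriv_exp, deriv_fun_sub, deriv_fun_add,
      deriv_const_sub_id', deriv_div_const, deriv_fun_pow, Nat.cast_ofNat, Nat.add_one_sub_one, pow_one,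
      deriv_id'', mul_one]
    ring
  have hanti : AntitoneOn h (Set.Ici 0) := by
    refine antitoneOn_of_deriv_nonpos (convex_Ici 0) (by fun_prop) (by fun_prop) fun t ht ↦ ?_
    have ht0 : 0 < t := by rwa [interior_Ici] at ht
    have : 0 ≤ exp t * t ^ 3 / 6 := by positivity
    rw [hderiv]
    linarith
  have h_le : h w ≤ h 0 := hanti Set.self_mem_Ici hw hw
  rw [exp_neg, ← one_div, le_div_iff₀ (exp_pos w)]
  simpa [h, mul_comm] using h_le

lemma exp_neg_eight_div_seven_le : exp (-(8 / 7)) ≤ 31891 / 100000 := by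
  have h := sum_le_exp_of_nonneg (x := 8 / 7) (by norm_num) 9
  norm_num [Finset.sum_range_succ, Nat.factorial] at h
  rw [exp_neg, inv_le_comm₀ (exp_pos _) (by norm_num)]
  linarith

lemma polynomial_inequality_dim13 {x y : ℝ} (hx : 0 ≤ x) (hy : 0 ≤ y) (hxy : x + y = 1) :
    2560 * (31891 / 100000) * (1 - 9 / 10 * x ^ 11) * (1 - x ^ 9) ≤
      (9801 / 16 + 243 * (1 - 9 / 10 * x ^ 11)) *
        (1 - 8 / 7 * x ^ 7 + (8 / 7 * x ^ 7) ^ 2 / 2 - (8 / 7 * x ^ 7) ^ 3 / 6) := by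
  have certificate : 50000 * 7 ^ 67 * ((9801 / 16 + 243 * (1 - 9 / 10 * x ^ 11)) *
        (1 - 8 / 7 * x ^ 7 + (8 / 7 * x ^ 7) ^ 2 / 2 - (8 / 7 * x ^ 7) ^ 3 / 6) -
      2560 * (31891 / 100000) * (1 - 9 / 10 * x ^ 11) * (1 - x ^ 9)) =
      (49 * x - 37) ^ 2 * (
          597009267912226774566047999862315282116774894591666930544544 * y ^ 30 +
          19491249140066976032955213880191722966890826211863061321343760 * x * y ^ 29 +
          308687574795604717239680565724154872443887857102292333617059184 * x ^ 2 * y ^ 28 +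
          3159207575433826979610189582332233173651029168905874489983397008 * x ^ 3 * y ^ 27 +
          23483865692461547345351262200877911341069006055213980307999703152 * x ^ 4 * y ^ 26 +
          135114475541427506990852327830950266186080546978308483614082922000 * x ^ 5 * y ^ 25 +
          626126253753198186317872049595641368638677654894665496222612809200 * x ^ 6 * y ^ 24 +
          2401137600789754615106988822500069112970395807751173949539657391848 * x ^ 7 * y ^ 23 +
          7770003671457390886357724468524388987572042805188191180974860132296 * x ^ 8 * y ^ 22 +
          21526018926476338108533246885678839464936387913769845440955706774704 * x ^ 9 * y ^ 21 +
          51619872011138778092174777778588680480233894752401771437585652867152 * x ^ 10 * y ^ 20 +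
          108048730988102456318036511922267160406219072569721068233541142064664 * x ^ 11 * y ^ 19 +
          198659703526734408122699674237176769339677426969938727843486579977240 * x ^ 12 * y ^ 18 +
          322304571646144532798254609403999292542471063606231092735048258553056 * x ^ 13 * y ^ 17 +
          462804525875462386592946002849677942538642294404049235737172455198432 * x ^ 14 * y ^ 16 +
          589105433147437638480252461461740157773883524482302292377076284730448 * x ^ 15 * y ^ 15 +
          664899248525765969119514739329008289808763031037928426986485866923120 * x ^ 16 * y ^ 14 +
          664685863035105537058825397617435063549345408151761287729838526073648 * x ^ 17 * y ^ 13 +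
          587121757070509199782458107735765768174699027976179174985900467028496 * x ^ 18 * y ^ 12 +
          456496615014493072187403988533368616372260288592746557892937112811264 * x ^ 19 * y ^ 11 +
          310753734236848362115528411228496832565314123924336819826172396425888 * x ^ 20 * y ^ 10 +
          183880269571059915158155650735224604959535447312129926149695473014288 * x ^ 21 * y ^ 9 +
          93679831666220101163871994354963689022085170385399069723993180280368 * x ^ 22 * y ^ 8 +
          40571459569056270917142866716236328618671997415338376609215807071688 * x ^ 23 * y ^ 7 +
          14680532248113265722142108603159160146563526354183234378069468805928 * x ^ 24 * y ^ 6 +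
          4331638824924221655729221441910088971578513741380231286410715458704 * x ^ 25 * y ^ 5 +
          1005566037987786519839860041329424121102092132790002136142796802992 * x ^ 26 * y ^ 4 +
          173586477461285151093663988416931475947846354526599775587632996696 * x ^ 27 * y ^ 3 +
          20184769323511672732701696325956233413425709643782474477043545560 * x ^ 28 * y ^ 2 +
          1284765003062314458502895797649012601831160682214835564622338944 * x ^ 29 * y +
          24170874561816423620665215071229507208591587883980553651959168 * x ^ 30) +
        (1729613025686009283918289396231895506927559654493004521815499 +
          406165853197726888393599863575107817829604628614178699331184 * x) := by
    obtain rfl : y = 1 - x := by linarith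
    ring
  rw [← sub_nonneg, ← mul_nonneg_iff_of_pos_left (by norm_num : (0 : ℝ) < 50000 * 7 ^ 67),
    certificate]
  positivity

lemma cleared_inequality_dim13 {x : ℝ} (hx0 : 0 ≤ x) (hx1 : x ≤ 1) :
    2560 * exp (8 / 7 * x ^ 7 - 8 / 7) * ((1 - 9 / 10 * x ^ 11) * (1 - x ^ 9)) ≤
      9801 / 16 + 243 * (1 - 9 / 10 * x ^ 11) := by
  have hA : 0 ≤ 1 - 9 / 10 * x ^ 11 := by linarith [pow_le_one₀ hx0 hx1 (n := 11)]
  have hB : 0 ≤ 1 - x ^ 9 := sub_nonneg.2 (pow_le_one₀ hx0 hx1)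
  set u := 8 / 7 * x ^ 7
  have hu : 0 ≤ u := by positivity
  calc 2560 * exp (u - 8 / 7) * ((1 - 9 / 10 * x ^ 11) * (1 - x ^ 9))
      = 2560 * exp (-(8 / 7)) * (1 - 9 / 10 * x ^ 11) * (1 - x ^ 9) * exp u := by
        rw [sub_eq_add_neg, exp_add]; ring
    _ ≤ 2560 * (31891 / 100000) * (1 - 9 / 10 * x ^ 11) * (1 - x ^ 9) * exp u := by
        gcongr; exact exp_neg_eight_div_seven_le
    _ ≤ (9801 / 16 + 243 * (1 - 9 / 10 * x ^ 11)) * (1 - u + u ^ 2 / 2 - u ^ 3 / 6) * exp u :=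
        mul_le_mul_of_nonneg_right
          (polynomial_inequality_dim13 hx0 (sub_nonneg.2 hx1) (add_sub_cancel x 1)) (exp_pos u).le
    _ ≤ (9801 / 16 + 243 * (1 - 9 / 10 * x ^ 11)) * exp (-u) * exp u := by
        gcongr; exact one_sub_add_sq_sub_cube_le_exp_neg hu
    _ = 9801 / 16 + 243 * (1 - 9 / 10 * x ^ 11) := by
        rw [mul_assoc, ← exp_add, neg_add_cancel, exp_zero, mul_one]

lemma exp_w_seven_halves_of_sq {x : ℝ} (hx : 0 < x) :
    exp (-4 * log (x ^ 2) - 8 / 7 + 8 / 7 * (x ^ 2) ^ ((7 : ℝ) / 2)) =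
      exp (8 / 7 * x ^ 7 - 8 / 7) / x ^ 8 := by
  have h7 : (x ^ 2) ^ ((7 : ℝ) / 2) = x ^ 7 := by exact_mod_cast sq_rpow_natCast_div_two hx.le 7
  rw [h7, ← exp_log (pow_pos hx 8), ← exp_sub, log_pow, log_pow]
  congr 1
  push_cast
  ring

lemma stability_lhs_dim13_of_sq {x : ℝ} (hx : 0 < x) (hA : 1 - 9 / 10 * x ^ 11 ≠ 0)
    (hB : 1 - x ^ 9 ≠ 0) :
    ((13 : ℝ) - 2) ^ 2 * ((13 : ℝ) - 4) ^ 2 / 16 *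
          (1 / (((x ^ 2) ^ 2 - 9 / 10 * (x ^ 2) ^ ((13 : ℝ) / 2 + 1)) *
            ((x ^ 2) ^ 2 - (x ^ 2) ^ ((13 : ℝ) / 2)))) +
        ((13 : ℝ) - 1) * ((13 : ℝ) - 4) ^ 2 / 4 *
          (1 / ((x ^ 2) ^ 2 * ((x ^ 2) ^ 2 - (x ^ 2) ^ ((13 : ℝ) / 2)))) =
      (9801 / 16 + 243 * (1 - 9 / 10 * x ^ 11)) / ((1 - 9 / 10 * x ^ 11) * (1 - x ^ 9)) / x ^ 8 := by
  have h13 : (x ^ 2) ^ ((13 : ℝ) / 2) = x ^ 13 := by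
    exact_mod_cast sq_rpow_natCast_div_two hx.le 13
  have h15 : (x ^ 2) ^ ((13 : ℝ) / 2 + 1) = x ^ 15 := by
    rw [← sq_rpow_natCast_div_two hx.le 15]; norm_num
  rw [h13, h15, show (x ^ 2) ^ 2 - 9 / 10 * x ^ 15 = x ^ 4 * (1 - 9 / 10 * x ^ 11) by ring,
    show (x ^ 2) ^ 2 - x ^ 13 = x ^ 4 * (1 - x ^ 9) by ring]
  generalize 1 - 9 / 10 * x ^ 11 = A at hA ⊢
  generalize 1 - x ^ 9 = B at hB ⊢
  field_simp
  ring

theorem pointwise_stability_dim13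
    (w : ℝ → ℝ)
    (hw : ∀ r : ℝ, w r = -4 * Real.log r - 8 / 7 + (8 / 7) * r ^ ((7 : ℝ) / 2)) :
    ∀ r ∈ Set.Ioo (0 : ℝ) 1,
      ((13 : ℝ) - 2) ^ 2 * ((13 : ℝ) - 4) ^ 2 / 16 *
          (1 / ((r ^ 2 - 9 / 10 * r ^ ((13 : ℝ) / 2 + 1)) * (r ^ 2 - r ^ ((13 : ℝ) / 2)))) +
        ((13 : ℝ) - 1) * ((13 : ℝ) - 4) ^ 2 / 4 *
          (1 / (r ^ 2 * (r ^ 2 - r ^ ((13 : ℝ) / 2)))) ≥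
      2560 * Real.exp (w r) := by
  rintro r ⟨hr0, hr1⟩
  obtain ⟨x, hx0, hx1, rfl⟩ : ∃ x, 0 < x ∧ x < 1 ∧ r = x ^ 2 :=
    ⟨√r, sqrt_pos.2 hr0, (sqrt_lt' one_pos).2 (by rwa [one_pow]), (sq_sqrt hr0.le).symm⟩
  have hA : 0 < 1 - 9 / 10 * x ^ 11 := by linarith [pow_le_one₀ hx0.le hx1.le (n := 11)]
  have hB : 0 < 1 - x ^ 9 := sub_pos.2 (pow_lt_one₀ hx0.le hx1 (by norm_num))
  rw [ge_iff_le, hw, exp_w_seven_halves_of_sq hx0, stability_lhs_dim13_of_sq hx0 hA.ne' hB.ne',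
    mul_div_assoc', div_le_div_iff_of_pos_right (pow_pos hx0 8), le_div_iff₀ (mul_pos hA hB)]
  exact cleared_inequality_dim13 hx0.le hx1.le
end
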